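/- Let γ : ℝ^{d−1} → ℝ be Lipschitz with constant L on B_ρ^{d−1}(x₀'), let x₀ ∈ ℝ^d with x₀_d = γ(x₀'), and define Ω ∩ B_ρ(x₀) = {y ∈ B_ρ(x₀) : y_d > γ(y')}. Then for every ε ≤ ρ/(2(L+2)), one has (Ω ∩ B_{ρ/2}(x₀)) + B_ε(ε(L+1)e_d) ⊆ Ω ∩ B_ρ(x₀). -/

import Mathlib

/-!
The translate `z` lies within `ε` of `ε (L + 1) e_d`, so its horizontal part has length
less than `ε` while its vertical part exceeds `ε L`. The Lipschitz bound lets `γ` rise by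
at most `L ε` over the horizontal shift, which the vertical shift more than makes up for,
so `y + z` stays above the graph. Moreover `‖z‖ < ε (L + 2) ≤ ρ / 2`, which keeps `y + z`
inside `B_ρ(x₀)`.
-/

open Metric Set

/-- Projection onto the first `d` coordinates. -/
noncomputable def projFst (d : ℕ) (y : EuclideanSpace ℝ (Fin (d + 1))) :
    EuclideanSpace ℝ (Fin d) := WithLp.toLp 2 (fun i : Fin d => y i.castSucc)

section Projection

variable {d : ℕ}

theorem projFst_add (v w : EuclideanSpace ℝ (Fin (d + 1))) :
    projFst d (v + w) = projFst d v + projFst d w := rfl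

theorem projFst_sub (v w : EuclideanSpace ℝ (Fin (d + 1))) :
    projFst d (v - w) = projFst d v - projFst d w := rfl

theorem projFst_smul_single_last (c : ℝ) :
    projFst d (c • EuclideanSpace.single (Fin.last d) 1) = 0 := by
  ext i
  simp [projFst]

theorem norm_projFst_le (w : EuclideanSpace ℝ (Fin (d + 1))) : ‖projFst d w‖ ≤ ‖w‖ := by
  rw [EuclideanSpace.norm_eq, EuclideanSpace.norm_eq, Fin.sum_univ_castSucc]
  gcongr
  exact le_add_of_nonneg_right (sq_nonneg _)

theorem norm_projFst_sub_projFst_le (v w : EuclideanSpace ℝ (Fin (d + 1))) :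
    ‖projFst d v - projFst d w‖ ≤ ‖v - w‖ := by
  rw [← projFst_sub]
  exact norm_projFst_le _

end Projection

section NearVertical

variable {d : ℕ} {z : EuclideanSpace ℝ (Fin (d + 1))} {c ε : ℝ}

theorem norm_projFst_lt_of_norm_sub_smul_single_last_lt
    (hz : ‖z - c • EuclideanSpace.single (Fin.last d) 1‖ < ε) : ‖projFst d z‖ < ε := by
  have h := norm_projFst_sub_projFst_le z (c • EuclideanSpace.single (Fin.last d) 1)
  rw [projFst_smul_single_last, sub_zero] at h
  exact h.trans_lt hz

theorem sub_lt_apply_last_of_norm_sub_smul_single_last_lt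
    (hz : ‖z - c • EuclideanSpace.single (Fin.last d) 1‖ < ε) : c - ε < z (Fin.last d) := by
  have h := (PiLp.norm_apply_le _ (Fin.last d)).trans_lt hz
  simp only [PiLp.sub_apply, PiLp.smul_apply, PiLp.single_eq_same, smul_eq_mul, mul_one,
    Real.norm_eq_abs] at h
  linarith [(abs_lt.mp h).1]

theorem norm_lt_of_norm_sub_smul_single_last_lt
    (hz : ‖z - c • EuclideanSpace.single (Fin.last d) 1‖ < ε) : ‖z‖ < ε + |c| := by
  have h := norm_sub_norm_le z (c • EuclideanSpace.single (Fin.last d) 1)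
  rw [norm_smul, PiLp.norm_single, norm_one, mul_one, Real.norm_eq_abs] at h
  linarith

end NearVertical

theorem stmt6_general (d : ℕ) (x₀ : EuclideanSpace ℝ (Fin (d + 1)))
    (γ : EuclideanSpace ℝ (Fin d) → ℝ) (L ρ : ℝ) (hL : 0 ≤ L)
    (hγ : ∀ z w : EuclideanSpace ℝ (Fin d),
      ‖z - projFst d x₀‖ < ρ → ‖w - projFst d x₀‖ < ρ → |γ z - γ w| ≤ L * ‖z - w‖) :
    ∀ ε : ℝ, 0 < ε → ε ≤ ρ / (2 * (L + 2)) →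
      ∀ y z : EuclideanSpace ℝ (Fin (d + 1)),
        ‖y - x₀‖ < ρ / 2 → γ (projFst d y) < y (Fin.last d) →
        ‖z - (ε * (L + 1)) • (EuclideanSpace.single (Fin.last d) (1:ℝ))‖ < ε →
        ‖y + z - x₀‖ < ρ ∧ γ (projFst d (y + z)) < (y + z) (Fin.last d) := by
  intro ε hε hερ y z hy hyγ hz
  have hερ' : ε * (L + 2) ≤ ρ / 2 := by
    linarith [(le_div_iff₀ (by positivity)).mp hερ]
  have hz_norm : ‖z‖ < ε * (L + 2) := by
    have h := norm_lt_of_norm_sub_smul_single_last_lt hz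
    rw [abs_of_nonneg (by positivity)] at h
    linarith
  have hyz : ‖y + z - x₀‖ < ρ := calc
    ‖y + z - x₀‖ = ‖(y - x₀) + z‖ := by rw [sub_add_eq_add_sub, add_sub_right_comm]
    _ ≤ ‖y - x₀‖ + ‖z‖ := norm_add_le _ _
    _ < ρ := by linarith
  refine ⟨hyz, ?_⟩
  have hγ_rise : γ (projFst d (y + z)) - γ (projFst d y) ≤ L * ε := calc
    _ ≤ L * ‖projFst d (y + z) - projFst d y‖ :=
      (abs_le.mp (hγ _ _ ((norm_projFst_sub_projFst_le _ _).trans_lt hyz)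
        ((norm_projFst_sub_projFst_le _ _).trans_lt (by linarith [norm_nonneg (y - x₀)])))).2
    _ = L * ‖projFst d z‖ := by rw [projFst_add, add_sub_cancel_left]
    _ ≤ L * ε := by gcongr; exact (norm_projFst_lt_of_norm_sub_smul_single_last_lt hz).le
  have hz_last := sub_lt_apply_last_of_norm_sub_smul_single_last_lt hz
  rw [PiLp.add_apply]
  linarith

/-- with `Ω ∩ B_ρ(x₀) = {y ∈ B_ρ(x₀) : y_d > γ(y')}` for a function `γ`
that is `L`-Lipschitz on `B_ρ^{d-1}(x₀')`, for every `ε ≤ ρ/(2(L+2))` it holds that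
`(Ω ∩ B_{ρ/2}(x₀)) + B_ε(ε(L+1)e_d) ⊆ Ω ∩ B_ρ(x₀)`. -/
theorem stmt6 (d : ℕ) (x₀ : EuclideanSpace ℝ (Fin (d + 1)))
    (γ : EuclideanSpace ℝ (Fin d) → ℝ) (L ρ : ℝ) (hL : 0 ≤ L) (hρ : 0 < ρ)
    (hγ : ∀ z w : EuclideanSpace ℝ (Fin d),
      ‖z - projFst d x₀‖ < ρ → ‖w - projFst d x₀‖ < ρ → |γ z - γ w| ≤ L * ‖z - w‖)
    (hx₀ : x₀ (Fin.last d) = γ (projFst d x₀)) :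
    ∀ ε : ℝ, 0 < ε → ε ≤ ρ / (2 * (L + 2)) →
      ∀ y z : EuclideanSpace ℝ (Fin (d + 1)),
        ‖y - x₀‖ < ρ / 2 → γ (projFst d y) < y (Fin.last d) →
        ‖z - (ε * (L + 1)) • (EuclideanSpace.single (Fin.last d) (1:ℝ))‖ < ε →
        ‖y + z - x₀‖ < ρ ∧ γ (projFst d (y + z)) < (y + z) (Fin.last d) :=
  stmt6_general d x₀ γ L ρ hL hγ
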